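/- Let E₁ = (t,t), E₂ = E₁ + y t^ν(−1,1) with y > 0, and consider the cylinder C(w, l) with axis the segment [0, E₁], half-width w = y t^ν and length l = t^μ measured from E₁, with ν < μ ≤ 1. Then the minimal Euclidean distance d_m between the upper lateral boundary ∂C(w,l)₊ and the segment from 0 to E₂ satisfies d_m = (√2 − 1)·y t^ν + O(t^{ν+μ−1}). -/

import Mathlib

/-!
The point of `∂C₊` level with `E₁` is at distance `(√2 − 1) w` from `E₂`, which gives the upper
bound. For the lower bound, the distance from a point `P` of `∂C₊` to the line `ℝ E₂` is at least
`(P × E₂) / |E₂|`. Here `P × E₂ = √2 w ((√2 − 1) t − λ l)` and `|E₂| = √2 √(t² + w²)`, which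
exceeds `√2 t` only by a relative `O(w²/t²)`; so the distance is at least
`(√2 − 1) w (1 − w²/t²) − w l / t`, and both error terms are `O(t^{ν+μ−1})` because `2ν ≤ μ + 1`.
-/

noncomputable def eudist (p q : ℝ × ℝ) : ℝ :=
  Real.sqrt ((p.1 - q.1) ^ 2 + (p.2 - q.2) ^ 2)

open Real

lemma abs_sInf_sub_le {S : Set ℝ} {a ε : ℝ} (ha : a ∈ S) (hS : ∀ x ∈ S, a - ε ≤ x) :
    |sInf S - a| ≤ ε := by
  have hε : 0 ≤ ε := by linarith [hS a ha]
  have hle : sInf S ≤ a := csInf_le ⟨a - ε, hS⟩ ha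
  have hge : a - ε ≤ sInf S := le_csInf ⟨a, ha⟩ hS
  rw [abs_sub_le_iff]
  constructor <;> linarith

lemma abs_cross_le_eudist_mul (p v : ℝ × ℝ) (s : ℝ) :
    |p.1 * v.2 - p.2 * v.1| ≤ eudist p (s * v.1, s * v.2) * √(v.1 ^ 2 + v.2 ^ 2) := by
  rw [eudist, ← sqrt_mul (by positivity)]
  apply abs_le_sqrt
  -- Lagrange's identity for `p - s • v` and `v`, whose cross product is that of `p` and `v`
  nlinarith [sq_nonneg ((p.1 - s * v.1) * v.1 + (p.2 - s * v.2) * v.2)]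

lemma one_sub_sq_div_sq_le_div_sqrt {t : ℝ} (ht : 0 < t) (w : ℝ) :
    1 - w ^ 2 / t ^ 2 ≤ t / √(t ^ 2 + w ^ 2) := by
  have hN : t ≤ √(t ^ 2 + w ^ 2) := le_sqrt_of_sq_le (by nlinarith [sq_nonneg w])
  have hNpos : 0 < √(t ^ 2 + w ^ 2) := ht.trans_le hN
  have hNsq : √(t ^ 2 + w ^ 2) ^ 2 = t ^ 2 + w ^ 2 := sq_sqrt (by positivity)
  calc 1 - w ^ 2 / t ^ 2 ≤ t ^ 2 / (t ^ 2 + w ^ 2) := by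
        rw [le_div_iff₀ (by positivity)]
        field_simp
        nlinarith [sq_nonneg w, sq_nonneg t, mul_nonneg (sq_nonneg w) (sq_nonneg w)]
    _ = (t / √(t ^ 2 + w ^ 2)) ^ 2 := by rw [div_pow, hNsq]
    _ ≤ t / √(t ^ 2 + w ^ 2) := by
        have h0 : 0 ≤ t / √(t ^ 2 + w ^ 2) := by positivity
        have h1 : t / √(t ^ 2 + w ^ 2) ≤ 1 := (div_le_one hNpos).2 hN
        nlinarith

lemma eudist_upper_boundary_E₂ (t : ℝ) {w : ℝ} (hw : 0 ≤ w) :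
    eudist (t - w / √2, t + w / √2) (t - w, t + w) = (√2 - 1) * w := by
  have h2 : √2 ^ 2 = 2 := sq_sqrt zero_le_two
  have h1 : 1 ≤ √2 := one_le_sqrt.2 one_le_two
  rw [eudist, ← sqrt_sq (by nlinarith : 0 ≤ (√2 - 1) * w)]
  congr 1
  field_simp
  linear_combination -(w ^ 2 * (√2 - 1) ^ 2) * h2

lemma sub_le_eudist_upper_boundary {t w l lam : ℝ} (ht : 0 < t) (hw : 0 ≤ w) (hl : 0 ≤ l)
    (hlam : lam ≤ 1) (s : ℝ) :
    (√2 - 1) * w * (1 - w ^ 2 / t ^ 2) - w * l / t ≤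
      eudist (t - w / √2 - lam * l / √2, t + w / √2 - lam * l / √2) (s * (t - w), s * (t + w)) := by
  set d := eudist (t - w / √2 - lam * l / √2, t + w / √2 - lam * l / √2) (s * (t - w), s * (t + w))
  set N := √(t ^ 2 + w ^ 2)
  have h2 : √2 ^ 2 = 2 := sq_sqrt zero_le_two
  have h1 : 1 ≤ √2 := one_le_sqrt.2 one_le_two
  have hN : t ≤ N := le_sqrt_of_sq_le (by nlinarith [sq_nonneg w])
  have hNpos : 0 < N := ht.trans_le hN
  have hcross_eq : (t - w / √2 - lam * l / √2) * (t + w) - (t + w / √2 - lam * l / √2) * (t - w)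
      = √2 * (w * ((√2 - 1) * t - lam * l)) := by
    field_simp
    linear_combination (w * lam * l + t * w * (1 - √2)) * h2
  have hnorm : √((t - w) ^ 2 + (t + w) ^ 2) = √2 * N := by
    rw [← sqrt_mul zero_le_two]; congr 1; ring
  have hcross : √2 * (w * ((√2 - 1) * t - lam * l)) ≤ √2 * (d * N) := by
    have := abs_cross_le_eudist_mul
      (t - w / √2 - lam * l / √2, t + w / √2 - lam * l / √2) (t - w, t + w) s
    simp only [hcross_eq, hnorm] at this
    linarith [le_abs_self (√2 * (w * ((√2 - 1) * t - lam * l)))]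
  have key : w * ((√2 - 1) * t - l) ≤ d * N :=
    calc w * ((√2 - 1) * t - l) ≤ w * ((√2 - 1) * t - lam * l) := by
          gcongr
          exact mul_le_of_le_one_left hl hlam
      _ ≤ d * N := le_of_mul_le_mul_left hcross (by positivity)
  calc (√2 - 1) * w * (1 - w ^ 2 / t ^ 2) - w * l / t
      ≤ (√2 - 1) * w * (t / N) - w * l / N := by
        have hc : 0 ≤ (√2 - 1) * w := mul_nonneg (by linarith) hw
        exact sub_le_sub (mul_le_mul_of_nonneg_left (one_sub_sq_div_sq_le_div_sqrt ht w) hc)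
          (div_le_div_of_nonneg_left (by positivity) ht hN)
    _ = w * ((√2 - 1) * t - l) / N := by ring
    _ ≤ d := div_le_of_le_mul₀ hNpos.le (sqrt_nonneg _) key

lemma rpow_mul_rpow_div_self {t : ℝ} (ht : 0 < t) (ν μ : ℝ) :
    t ^ ν * t ^ μ / t = t ^ (ν + μ - 1) := by
  rw [rpow_sub ht, rpow_add ht, rpow_one]

lemma rpow_pow_three_div_sq_le {t ν μ : ℝ} (ht : 1 ≤ t) (h : 2 * ν ≤ μ + 1) :
    (t ^ ν) ^ 3 / t ^ 2 ≤ t ^ (ν + μ - 1) := by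
  have htpos : 0 < t := one_pos.trans_le ht
  calc (t ^ ν) ^ 3 / t ^ 2 = t ^ (3 * ν - 2) := by
        rw [← rpow_natCast, ← rpow_mul htpos.le, ← rpow_natCast, ← rpow_sub htpos]
        norm_num [mul_comm]
    _ ≤ t ^ (ν + μ - 1) := rpow_le_rpow_of_exponent_le ht (by linarith)

/-- With `E₁ = (t,t)`, `E₂ = E₁ + y t^ν(−1,1)` (`y > 0`), the cylinder `C(w,l)` of axis
`[0,E₁]`, half-width `w = y t^ν`, length `l = t^μ` from `E₁` (`ν < μ ≤ 1`): the minimal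
distance `d_m` between the upper lateral boundary `∂C(w,l)₊` and the segment `[0,E₂]`
satisfies `d_m = (√2 − 1) y t^ν + O(t^{ν+μ−1})`. -/
theorem stmt_13 (y ν μ : ℝ) (hy : 0 < y) (hνμ : ν < μ) (hμ : μ ≤ 1) :
    ∃ C t₀ : ℝ, 0 < C ∧ ∀ t ≥ t₀,
      let w : ℝ := y * t ^ ν
      let l : ℝ := t ^ μ
      let E₂ : ℝ × ℝ := (t - y * t ^ ν, t + y * t ^ ν)
      let dm : ℝ := sInf {r : ℝ | ∃ lam ∈ Set.Icc (0 : ℝ) 1, ∃ s ∈ Set.Icc (0 : ℝ) 1,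
        r = eudist (t - w / Real.sqrt 2 - lam * l / Real.sqrt 2,
                    t + w / Real.sqrt 2 - lam * l / Real.sqrt 2)
              (s * E₂.1, s * E₂.2)}
      |dm - (Real.sqrt 2 - 1) * y * t ^ ν| ≤ C * t ^ (ν + μ - 1) := by
  refine ⟨y ^ 3 + y, 1, by positivity, fun t ht => ?_⟩
  have htpos : 0 < t := one_pos.trans_le ht
  have hw : 0 ≤ y * t ^ ν := by positivity
  have hr : √2 - 1 ≤ 1 := by
    nlinarith [sq_sqrt (zero_le_two : (0:ℝ) ≤ 2), sqrt_nonneg 2]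
  have herr : (√2 - 1) * (y * t ^ ν) * ((y * t ^ ν) ^ 2 / t ^ 2) + y * t ^ ν * t ^ μ / t
      ≤ (y ^ 3 + y) * t ^ (ν + μ - 1) := by
    calc _ = (√2 - 1) * (y ^ 3 * ((t ^ ν) ^ 3 / t ^ 2)) + y * (t ^ ν * t ^ μ / t) := by ring
      _ ≤ 1 * (y ^ 3 * t ^ (ν + μ - 1)) + y * t ^ (ν + μ - 1) := by
        rw [rpow_mul_rpow_div_self htpos]
        gcongr
        exact rpow_pow_three_div_sq_le ht (by linarith)
      _ = _ := by ring
  show |sInf _ - _| ≤ _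
  rw [mul_assoc (√2 - 1)]
  apply abs_sInf_sub_le
  · exact ⟨0, ⟨le_rfl, zero_le_one⟩, 1, ⟨zero_le_one, le_rfl⟩,
      by simpa using (eudist_upper_boundary_E₂ t hw).symm⟩
  · rintro x ⟨lam, ⟨-, hlam⟩, s, -, rfl⟩
    have := sub_le_eudist_upper_boundary (l := t ^ μ) htpos hw (by positivity) hlam s
    linarith
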